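/- Let G be a noncrossing simple graph on {1,…,n}. For each i define r(i) = min({j : j is adjacent to i} ∪ {i}) and s(i) = max({j : j is adjacent to i} ∪ {i}), and let c(i) = ({i} × [−i, −r(i) + 1/2]) ∪ ([i, s(i) + 1/2] × {−i}) ⊆ ℝ² (an L-shape with corner (i, −i)). Then for all i < j: c(i) ∩ c(j) is nonempty if and only if i and j are adjacent in G, and in that case c(i) ∩ c(j) = {(j, −i)}. -/
import Mathlib


open Finset in
/-- `min({j : j adjacent to i} ∪ {i})` in a graph on `Fin n`. -/
def minNbr {n : ℕ} (G : SimpleGraph (Fin n)) [DecidableRel G.Adj] (i : Fin n) : Fin n :=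
  (insert i (G.neighborFinset i)).min' (Finset.insert_nonempty i _)

open Finset in
/-- `max({j : j adjacent to i} ∪ {i})` in a graph on `Fin n`. -/
def maxNbr {n : ℕ} (G : SimpleGraph (Fin n)) [DecidableRel G.Adj] (i : Fin n) : Fin n :=
  (insert i (G.neighborFinset i)).max' (Finset.insert_nonempty i _)

/-- The vertex `i ∈ {1, …, n}` (here: `i : Fin n`, representing the integer `i + 1`)
regarded as a real number. -/
def vtx {n : ℕ} (i : Fin n) : ℝ := (i : ℕ) + 1

/-- The L-shape `c(i) = ({i} × [−i, −r(i) + 1/2]) ∪ ([i, s(i) + 1/2] × {−i})`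
with corner `(i, −i)`. -/
def cL {n : ℕ} (G : SimpleGraph (Fin n)) [DecidableRel G.Adj] (i : Fin n) : Set (ℝ × ℝ) :=
  ({vtx i} : Set ℝ) ×ˢ Set.Icc (-vtx i) (-vtx (minNbr G i) + 1/2) ∪
    Set.Icc (vtx i) (vtx (maxNbr G i) + 1/2) ×ˢ ({-vtx i} : Set ℝ)

lemma vtx_lt_vtx {n : ℕ} {i j : Fin n} (h : i < j) : vtx i < vtx j := by
  unfold vtx
  have : (i : ℕ) < j := h
  exact_mod_cast Nat.add_lt_add_right this 1

lemma vtx_le_vtx {n : ℕ} {i j : Fin n} (h : i ≤ j) : vtx i ≤ vtx j := by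
  unfold vtx
  have : (i : ℕ) ≤ j := h
  exact_mod_cast Nat.add_le_add_right this 1

lemma vtx_le_add_half {n : ℕ} {i j : Fin n} (h : vtx i ≤ vtx j + 1/2) : i ≤ j := by
  unfold vtx at h
  by_contra hc
  push_neg at hc
  have : (j : ℕ) < i := hc
  have : ((j:ℕ):ℝ) + 1 ≤ (i:ℕ) := by exact_mod_cast this
  linarith

open Finset in
lemma le_maxNbr_of_adj {n : ℕ} (G : SimpleGraph (Fin n)) [DecidableRel G.Adj]
    {i j : Fin n} (h : G.Adj i j) : j ≤ maxNbr G i :=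
  Finset.le_max' _ j (Finset.mem_insert_of_mem ((G.mem_neighborFinset i j).mpr h))

open Finset in
lemma minNbr_le_of_adj {n : ℕ} (G : SimpleGraph (Fin n)) [DecidableRel G.Adj]
    {i j : Fin n} (h : G.Adj i j) : minNbr G i ≤ j :=
  Finset.min'_le _ j (Finset.mem_insert_of_mem ((G.mem_neighborFinset i j).mpr h))

open Finset in
lemma maxNbr_spec {n : ℕ} (G : SimpleGraph (Fin n)) [DecidableRel G.Adj] (i : Fin n) :
    maxNbr G i = i ∨ G.Adj i (maxNbr G i) := by
  have := Finset.max'_mem (insert i (G.neighborFinset i)) (Finset.insert_nonempty i _)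
  rcases Finset.mem_insert.mp this with h | h
  · exact Or.inl h
  · exact Or.inr ((G.mem_neighborFinset i _).mp h)

open Finset in
lemma minNbr_spec {n : ℕ} (G : SimpleGraph (Fin n)) [DecidableRel G.Adj] (i : Fin n) :
    minNbr G i = i ∨ G.Adj i (minNbr G i) := by
  have := Finset.min'_mem (insert i (G.neighborFinset i)) (Finset.insert_nonempty i _)
  rcases Finset.mem_insert.mp this with h | h
  · exact Or.inl h
  · exact Or.inr ((G.mem_neighborFinset i _).mp h)

/-- For a noncrossing graph on `{1, …, n}`, the explicit L-shapes `cL` intersect exactly at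
edges, and each intersection is the single point `(j, −i)`. -/
theorem noncrossing_explicit_L_curves
    {n : ℕ} (G : SimpleGraph (Fin n)) [DecidableRel G.Adj]
    (hnc : ∀ i j k l : Fin n, i < j → j < k → k < l → G.Adj i k → ¬ G.Adj j l) :
    ∀ i j : Fin n, i < j →
      (((cL G i ∩ cL G j).Nonempty ↔ G.Adj i j) ∧
        (G.Adj i j → cL G i ∩ cL G j = {(vtx j, -vtx i)})) := by
  intro i j hij
  have hvlt : vtx i < vtx j := vtx_lt_vtx hij
  -- any intersection point must be (vtx j, -vtx i), with the bound conditions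
  have key : ∀ p : ℝ × ℝ, p ∈ cL G i ∩ cL G j →
      p = (vtx j, -vtx i) ∧ j ≤ maxNbr G i ∧ minNbr G j ≤ i := by
    rintro ⟨x, y⟩ ⟨hi, hj⟩
    simp only [cL, Set.mem_union, Set.mem_prod, Set.mem_singleton_iff, Set.mem_Icc] at hi hj
    rcases hi with ⟨hx1, hy1, hy1'⟩ | ⟨⟨hx1, hx1'⟩, hy1⟩ <;>
      rcases hj with ⟨hx2, hy2, hy2'⟩ | ⟨⟨hx2, hx2'⟩, hy2⟩
    · exfalso; rw [hx1] at hx2; linarith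
    · exfalso; rw [hx1] at hx2; linarith
    · subst hx2; subst hy1
      refine ⟨rfl, ?_, ?_⟩
      · exact vtx_le_add_half hx1'
      · have : vtx (minNbr G j) ≤ vtx i + 1/2 := by linarith
        exact vtx_le_add_half this
    · exfalso; rw [hy1] at hy2; linarith
  -- the bound conditions imply adjacency (using noncrossing)
  have adj_of : j ≤ maxNbr G i → minNbr G j ≤ i → G.Adj i j := by
    intro h1 h2
    rcases maxNbr_spec G i with hk | hk
    · exact absurd (h1.trans_eq hk) (not_le.mpr hij)
    rcases minNbr_spec G j with hl | hl
    · rw [hl] at h2; exact absurd h2 (not_le.mpr hij)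
    set k := maxNbr G i with hkdef
    set l := minNbr G j with hldef
    rcases eq_or_lt_of_le h1 with he | hlt
    · exact he ▸ hk
    rcases eq_or_lt_of_le h2 with he | hlt2
    · exact (he ▸ hl).symm
    exact absurd hk (hnc l i j k hlt2 hij hlt hl.symm)
  -- adjacency gives the explicit intersection point
  have mem_of_adj : G.Adj i j → (vtx j, -vtx i) ∈ cL G i ∩ cL G j := by
    intro hadj
    have h1 : vtx j ≤ vtx (maxNbr G i) + 1/2 := by
      have := vtx_le_vtx (le_maxNbr_of_adj G hadj)
      linarith
    have h2 : -vtx i ≤ -vtx (minNbr G j) + 1/2 := by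
      have := vtx_le_vtx (minNbr_le_of_adj G hadj.symm)
      linarith
    constructor
    · right
      exact ⟨⟨hvlt.le, h1⟩, rfl⟩
    · left
      refine ⟨rfl, ?_, h2⟩
      show -vtx j ≤ -vtx i
      linarith
  refine ⟨⟨?_, fun hadj => ⟨_, mem_of_adj hadj⟩⟩, ?_⟩
  · rintro ⟨p, hp⟩
    obtain ⟨_, h1, h2⟩ := key p hp
    exact adj_of h1 h2
  · intro hadj
    ext p
    constructor
    · intro hp
      exact (key p hp).1
    · rintro rfl
      exact mem_of_adj hadj
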